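/- Let m ≥ 2 and suppose a real sequence (a_n)_{n≥1} has the property that for every sufficiently large x there exist n, n' ∈ [x − c x^{1−1/m}, x + c x^{1−1/m}] ∩ ℕ with a_n > 0 and a_{n'} < 0 (c > 0 fixed). Then #{n ≤ x : a_n > 0} ≫ x^{1/m} and #{n ≤ x : a_n < 0} ≫ x^{1/m} for all large x. -/

import Mathlib

/-!
Write `θ = 1 - 1/m`. For large `x` place `J ≍ x^(1-θ) = x^(1/m)` centres
`y_j = x/2 + j(2c+1)x^θ` in `[x/2, x]`. Since `y_j^θ ≤ x^θ`, the windows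
`[y_j - c y_j^θ, y_j + c y_j^θ]` are pairwise disjoint subsets of `[0, x]`, and each contains an
index `n` with `a n > 0` and one with `a n < 0`.
-/

open Real Set Filter Finset

theorem le_card_filter_of_separated_windows {p : ℕ → Prop} [DecidablePred p] {J : ℕ} {x : ℝ}
    (lo hi : Fin J → ℝ) (hsep : ∀ i j, i < j → hi i < lo j) (hle : ∀ j, hi j ≤ x)
    (hp : ∀ j, ∃ n : ℕ, (n : ℝ) ∈ Icc (lo j) (hi j) ∧ p n) :
    J ≤ #{n ∈ range (⌊x⌋₊ + 1) | p n} := by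
  choose f hf hpf using hp
  have hmono : StrictMono f := fun i j hij => by
    exact_mod_cast (hf i).2.trans_lt ((hsep i j hij).trans_le (hf j).1)
  calc J = #(univ : Finset (Fin J)) := by simp
    _ ≤ _ := by
      refine card_le_card_of_injOn f (fun j _ => ?_) hmono.injective.injOn
      rw [Finset.mem_coe, Finset.mem_filter, Finset.mem_range]
      exact ⟨Nat.lt_succ_of_le (Nat.le_floor ((hf j).2.trans (hle j))), hpf j⟩

theorem le_card_filter_of_mem_windows {p : ℕ → Prop} [DecidablePred p] {θ c X₀ x : ℝ}
    (hθ₀ : 0 ≤ θ) (hc : 0 ≤ c)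
    (h : ∀ y, X₀ ≤ y → ∃ n : ℕ, (n : ℝ) ∈ Icc (y - c * y ^ θ) (y + c * y ^ θ) ∧ p n)
    (hx₀ : 0 < x) (hX₀ : 2 * X₀ ≤ x) (hlarge : 8 * (2 * c + 1) ≤ x ^ (1 - θ)) :
    x ^ (1 - θ) / (8 * (2 * c + 1)) ≤ #{n ∈ range (⌊x⌋₊ + 1) | p n} := by
  set t := x ^ θ
  set K := 2 * c + 1
  have hK : 0 < K := by positivity
  have ht : 0 < t := rpow_pos_of_pos hx₀ θ
  have hst : x ^ (1 - θ) * t = x := by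
    rw [← rpow_add hx₀, sub_add_cancel, rpow_one]
  set J := ⌊x ^ (1 - θ) / (4 * K)⌋₊
  have hJ : x ^ (1 - θ) / (8 * K) ≤ J := by
    have := Nat.div_two_lt_floor (a := x ^ (1 - θ) / (4 * K))
      (by rw [le_div_iff₀ (by positivity)]; linarith)
    calc x ^ (1 - θ) / (8 * K) = x ^ (1 - θ) / (4 * K) / 2 := by rw [div_div]; ring
      _ ≤ J := this.le
  have hJKt : J * (K * t) ≤ x / 4 := by
    have := Nat.floor_le (a := x ^ (1 - θ) / (4 * K)) (by positivity)
    calc J * (K * t) ≤ x ^ (1 - θ) / (4 * K) * (K * t) := by gcongr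
      _ = x ^ (1 - θ) * t / 4 := by field_simp
      _ = x / 4 := by rw [hst]
  have hle : ∀ j : Fin J, x / 2 + j * (K * t) + c * t ≤ x := fun j => by
    have : (j : ℝ) + 1 ≤ J := by exact_mod_cast j.isLt
    nlinarith
  -- consecutive centres are `K t = 2 c t + t` apart, more than twice the radius `c t`
  refine hJ.trans (Nat.cast_le.mpr (le_card_filter_of_separated_windows
    (fun j => x / 2 + j * (K * t) - c * t) (fun j => x / 2 + j * (K * t) + c * t)
    (fun i j hij => ?_) hle (fun j => ?_)))
  · have : (i : ℝ) + 1 ≤ j := by exact_mod_cast hij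
    nlinarith [mul_le_mul_of_nonneg_right this (mul_pos hK ht).le]
  · have hjKt : 0 ≤ (j : ℝ) * (K * t) := by positivity
    have hyt : c * (x / 2 + j * (K * t)) ^ θ ≤ c * t := by
      have := hle j
      gcongr
      exact rpow_le_rpow (by positivity) (by nlinarith) hθ₀
    obtain ⟨n, hn, hpn⟩ := h (x / 2 + j * (K * t)) (by linarith)
    exact ⟨n, ⟨by linarith [hn.1], by linarith [hn.2]⟩, hpn⟩

theorem eventually_le_card_filter_of_mem_windows {p : ℕ → Prop} [DecidablePred p]
    {θ c X₀ : ℝ}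
    (hθ₀ : 0 ≤ θ) (hθ₁ : θ < 1) (hc : 0 ≤ c)
    (h : ∀ y, X₀ ≤ y → ∃ n : ℕ, (n : ℝ) ∈ Icc (y - c * y ^ θ) (y + c * y ^ θ) ∧ p n) :
    ∀ᶠ x in atTop,
      x ^ (1 - θ) / (8 * (2 * c + 1)) ≤ #{n ∈ range (⌊x⌋₊ + 1) | p n} := by
  filter_upwards [eventually_gt_atTop 0, eventually_ge_atTop (2 * X₀),
    (tendsto_rpow_atTop (sub_pos.mpr hθ₁)).eventually_ge_atTop (8 * (2 * c + 1))]
    with x hx₀ hX₀ hlarge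
  exact le_card_filter_of_mem_windows hθ₀ hc h hx₀ hX₀ hlarge

theorem stmt18 (m : ℕ) (hm : 2 ≤ m) (a : ℕ → ℝ) (c : ℝ) (hc : 0 < c) (X₀ : ℝ)
    (hosc : ∀ x : ℝ, X₀ ≤ x →
      ∃ n n' : ℕ,
        (n : ℝ) ∈ Set.Icc (x - c * x ^ (1 - 1 / (m:ℝ))) (x + c * x ^ (1 - 1 / (m:ℝ))) ∧
        (n' : ℝ) ∈ Set.Icc (x - c * x ^ (1 - 1 / (m:ℝ))) (x + c * x ^ (1 - 1 / (m:ℝ))) ∧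
        0 < a n ∧ a n' < 0) :
    ∃ c' : ℝ, 0 < c' ∧ ∃ X₁ : ℝ, ∀ x : ℝ, X₁ ≤ x →
      c' * x ^ (1 / (m:ℝ)) ≤
        ((Finset.range (⌊x⌋₊ + 1)).filter (fun n => 0 < a n)).card ∧
      c' * x ^ (1 / (m:ℝ)) ≤
        ((Finset.range (⌊x⌋₊ + 1)).filter (fun n => a n < 0)).card := by
  have hm₀ : (0 : ℝ) < m := by norm_cast; omega
  have hθ₀ : 0 ≤ 1 - 1 / (m : ℝ) :=
    sub_nonneg.mpr (div_le_one_of_le₀ (by norm_cast; omega) hm₀.le)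
  have hθ₁ : 1 - 1 / (m : ℝ) < 1 := sub_lt_self _ (by positivity)
  have hpos := eventually_le_card_filter_of_mem_windows (p := fun n => 0 < a n) hθ₀ hθ₁ hc.le
    fun y hy => let ⟨n, _, hn, _, han, _⟩ := hosc y hy; ⟨n, hn, han⟩
  have hneg := eventually_le_card_filter_of_mem_windows (p := fun n => a n < 0) hθ₀ hθ₁ hc.le
    fun y hy => let ⟨_, n', _, hn', _, han'⟩ := hosc y hy; ⟨n', hn', han'⟩
  obtain ⟨X₁, hX₁⟩ := eventually_atTop.mp (hpos.and hneg)
  refine ⟨1 / (8 * (2 * c + 1)), by positivity, X₁, fun x hx => ?_⟩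
  simpa only [sub_sub_cancel, one_div_mul_eq_div] using hX₁ x hx
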